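/- The image of the momentum map of the symmetric quadratic spherical pendulum is exactly the epigraph of the parabola h = j²/2: F(S) = {(j, h) ∈ ℝ² : h ≥ j²/2}. -/

import Mathlib

open Real

/-- `T*S²` embedded in ℝ⁶: `x² + y² + z² = 1` and `xu + yv + zw = 0`. -/
def TstarSphere : Set (Fin 6 → ℝ) :=
  {p | p 0 ^ 2 + p 1 ^ 2 + p 2 ^ 2 = 1 ∧
       p 0 * p 3 + p 1 * p 4 + p 2 * p 5 = 0}

/-- The momentum map `F = (J, H)` of the symmetric quadratic spherical pendulum:
`J = xv - yu` and `H = (u² + v² + w²)/2 + z²`. -/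
noncomputable def Fmap (p : Fin 6 → ℝ) : ℝ × ℝ :=
  (p 0 * p 4 - p 1 * p 3, (p 3 ^ 2 + p 4 ^ 2 + p 5 ^ 2) / 2 + p 2 ^ 2)

/-- the image of the momentum map of the symmetric quadratic
spherical pendulum is the epigraph of the parabola `h = j²/2`. -/
theorem momentum_map_image :
    Fmap '' TstarSphere = {q : ℝ × ℝ | q.1 ^ 2 / 2 ≤ q.2} := by
  ext q
  constructor
  · rintro ⟨p, ⟨hs, ho⟩, rfl⟩
    simp only [Fmap, Set.mem_setOf_eq]
    nlinarith [sq_nonneg (p 2), sq_nonneg (p 5), sq_nonneg (p 0 * p 3 + p 1 * p 4),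
      sq_nonneg (p 2 * (p 0 * p 4 - p 1 * p 3)), sq_nonneg (p 0 * p 4 - p 1 * p 3)]
  · intro hq
    obtain ⟨j, h⟩ := q
    simp only [Set.mem_setOf_eq] at hq
    refine ⟨![1, 0, 0, 0, j, Real.sqrt (2 * h - j ^ 2)], ⟨?_, ?_⟩, ?_⟩
    · norm_num [show ![(1:ℝ), 0, 0, 0, j, Real.sqrt (2 * h - j ^ 2)] 2 = 0 from rfl, show ![(1:ℝ), 0, 0, 0, j, Real.sqrt (2 * h - j ^ 2)] 3 = 0 from rfl, show ![(1:ℝ), 0, 0, 0, j, Real.sqrt (2 * h - j ^ 2)] 4 = j from rfl]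
    · norm_num [show ![(1:ℝ), 0, 0, 0, j, Real.sqrt (2 * h - j ^ 2)] 2 = 0 from rfl, show ![(1:ℝ), 0, 0, 0, j, Real.sqrt (2 * h - j ^ 2)] 3 = 0 from rfl, show ![(1:ℝ), 0, 0, 0, j, Real.sqrt (2 * h - j ^ 2)] 4 = j from rfl]
    · have hnn : (0:ℝ) ≤ 2 * h - j ^ 2 := by linarith
      have : Real.sqrt (2 * h - j ^ 2) ^ 2 = 2 * h - j ^ 2 := Real.sq_sqrt hnn
      have h5 : ![1, 0, 0, 0, j, Real.sqrt (2 * h - j ^ 2)] 5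
          = Real.sqrt (2 * h - j ^ 2) := rfl
      simp only [Fmap]
      norm_num [h5, this, show ![(1:ℝ), 0, 0, 0, j, Real.sqrt (2 * h - j ^ 2)] 2 = 0 from rfl, show ![(1:ℝ), 0, 0, 0, j, Real.sqrt (2 * h - j ^ 2)] 3 = 0 from rfl, show ![(1:ℝ), 0, 0, 0, j, Real.sqrt (2 * h - j ^ 2)] 4 = j from rfl]
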